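/- arXiv:2211.02780 — 4 statements merged into one kernel-verified Lean document; each statement's English description precedes it below -/
import Mathlib

section
/- Let m ≥ 1 be an integer, let v_0, v_1, …, v_m and a be real numbers, and let σ_1, …, σ_m ≥ 0 satisfy (σ_1 + ⋯ + σ_m)/m ≥ 1. If v_0 − a ≥ 0 and (σ_m v_m + ⋯ + σ_1 v_1)/m − v_0 ≤ −a, then there exists an index l ∈ {1, …, m} such that v_l ≤ v_0 − a. -/
/-- If `v 0 - a ≥ 0`, the weights `σ 1, …, σ m` are nonnegative with
average at least one, and the weighted average decrease condition
`(σ m * v m + ⋯ + σ 1 * v 1)/m - v 0 ≤ -a` holds, then some index `l ∈ {1,…,m}`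
satisfies `v l ≤ v 0 - a`. -/
theorem stmt_0 (m : ℕ) (hm : 1 ≤ m) (v : ℕ → ℝ) (a : ℝ) (σ : ℕ → ℝ)
    (hσ : ∀ i ∈ Finset.Icc 1 m, 0 ≤ σ i)
    (hσavg : 1 ≤ (∑ i ∈ Finset.Icc 1 m, σ i) / (m : ℝ))
    (h0 : v 0 - a ≥ 0)
    (hadc : (∑ i ∈ Finset.Icc 1 m, σ i * v i) / (m : ℝ) - v 0 ≤ -a) :
    ∃ l, 1 ≤ l ∧ l ≤ m ∧ v l ≤ v 0 - a := by
  by_contra hc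
  push_neg at hc
  have hmpos : (0 : ℝ) < m := by exact_mod_cast hm
  have hσsum : (m : ℝ) ≤ ∑ i ∈ Finset.Icc 1 m, σ i := by
    rwa [le_div_iff₀ hmpos, one_mul] at hσavg
  -- some σ i is positive
  have hpos : ∃ i ∈ Finset.Icc 1 m, 0 < σ i := by
    by_contra h
    push_neg at h
    have : ∑ i ∈ Finset.Icc 1 m, σ i = 0 :=
      Finset.sum_eq_zero fun i hi => le_antisymm (h i hi) (hσ i hi)
    linarith
  obtain ⟨j, hj, hjpos⟩ := hpos
  have hlt : ∑ i ∈ Finset.Icc 1 m, σ i * (v 0 - a) <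
      ∑ i ∈ Finset.Icc 1 m, σ i * v i := by
    apply Finset.sum_lt_sum
    · intro i hi
      simp only [Finset.mem_Icc] at hi
      exact mul_le_mul_of_nonneg_left (hc i hi.1 hi.2).le (hσ i (Finset.mem_Icc.mpr hi))
    · refine ⟨j, hj, ?_⟩
      simp only [Finset.mem_Icc] at hj
      exact mul_lt_mul_of_pos_left (hc j hj.1 hj.2) hjpos
  rw [← Finset.sum_mul] at hlt
  have h1 : (m : ℝ) * (v 0 - a) ≤ (∑ i ∈ Finset.Icc 1 m, σ i) * (v 0 - a) :=
    mul_le_mul_of_nonneg_right hσsum h0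
  have h2 : (∑ i ∈ Finset.Icc 1 m, σ i * v i) ≤ (m : ℝ) * (v 0 - a) := by
    have h3 : (∑ i ∈ Finset.Icc 1 m, σ i * v i) / (m : ℝ) ≤ v 0 - a := by linarith
    rw [div_le_iff₀ hmpos] at h3
    linarith
  linarith
end

section
/- Consider the discrete-time control system and let V : ℝ^n → ℝ be a generalized discrete-time control Lyapunov function (g-dclf) of order m (case q = 0) with weights σ_1, …, σ_m and comparison function α. Then for every x^0 ∈ ℝ^n there exist controls ν_0, …, ν_{m−1} ∈ U, steering x^0 through states x^{j+1} = f(x^j, ν_j) ∈ X for j = 0, …, m−1, and an index l ∈ {1, …, m} such that V(x^l) − V(x^0) ≤ −α(x^0). -/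
open Filter Topology

/-- A function `W` on a normed space is positive definite if `W 0 = 0` and
`W z > 0` for all `z ≠ 0`. -/
def PosDef {E : Type*} [NormedAddCommGroup E] (W : E → ℝ) : Prop :=
  W 0 = 0 ∧ ∀ z : E, z ≠ 0 → 0 < W z

/-- A function `W` is radially unbounded if `W z → ∞` as `‖z‖ → ∞`. -/
def RadUnbounded {E : Type*} [NormedAddCommGroup E] (W : E → ℝ) : Prop :=
  ∀ c : ℝ, ∃ R : ℝ, ∀ z : E, R ≤ ‖z‖ → c ≤ W z

/-- The trajectory of the control system `x^{k+1} = f(x^k, u^k)` started at `x0`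
and driven by the input sequence `u`. -/
def traj {n p : ℕ} (f : (Fin n → ℝ) → (Fin p → ℝ) → Fin n → ℝ)
    (x0 : Fin n → ℝ) (u : ℕ → Fin p → ℝ) : ℕ → Fin n → ℝ
  | 0 => x0
  | k + 1 => f (traj f x0 u k) (u k)

/-- Extension of a finite control sequence by zero. -/
def extCtrl {p q : ℕ} (u : Fin q → Fin p → ℝ) : ℕ → Fin p → ℝ :=
  fun k => if h : k < q then u ⟨k, h⟩ else 0

/-- The window `(ν_l, …, ν_{l+q-1})` of an infinite control sequence. -/
def window {p : ℕ} (ν : ℕ → Fin p → ℝ) (l q : ℕ) : Fin q → Fin p → ℝ :=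
  fun i => ν (l + (i : ℕ))

/-- The set of feasible controls `U_{[0:q-1]}(x)`: sequences of `q` inputs in `U`
whose generated states stay in `X`. -/
def FeasCtrl {n p : ℕ} (f : (Fin n → ℝ) → (Fin p → ℝ) → Fin n → ℝ)
    (X : Set (Fin n → ℝ)) (U : Set (Fin p → ℝ)) (q : ℕ) (x : Fin n → ℝ) :
    Set (Fin q → Fin p → ℝ) :=
  {u | ∀ j : Fin q, u j ∈ U ∧ traj f x (extCtrl u) ((j : ℕ) + 1) ∈ X}

/-- if `V` is a g-dclf of order `m` (case `q = 0`) for the system,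
then from every initial state there is a feasible `m`-step control under which
`V` has decreased by at least `α x0` at some index `l ∈ {1,…,m}`. -/
theorem stmt_1 (n p m : ℕ) (hn : 1 ≤ n) (hp : 1 ≤ p) (hm : 1 ≤ m)
    (f : (Fin n → ℝ) → (Fin p → ℝ) → Fin n → ℝ)
    (hf : Continuous (Function.uncurry f)) (hf0 : f 0 0 = 0)
    (X : Set (Fin n → ℝ)) (U : Set (Fin p → ℝ))
    (hX : (0 : Fin n → ℝ) ∈ interior X) (hU : (0 : Fin p → ℝ) ∈ interior U)
    (V α : (Fin n → ℝ) → ℝ)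
    (hVc : Continuous V) (hVpd : PosDef V)
    (hαc : Continuous α) (hαpd : PosDef α) (hαru : RadUnbounded α)
    (σ : ℕ → ℝ) (hσ : ∀ i ∈ Finset.Icc 1 m, 0 ≤ σ i)
    (hσavg : 1 ≤ (∑ i ∈ Finset.Icc 1 m, σ i) / (m : ℝ))
    (hVα : ∀ x : Fin n → ℝ, V x - α x ≥ 0)
    (hadc : ∀ x0 : Fin n → ℝ, ∃ ν : ℕ → Fin p → ℝ,
      (∀ j < m, ν j ∈ U ∧ traj f x0 ν (j + 1) ∈ X) ∧
      (∑ i ∈ Finset.Icc 1 m, σ i * V (traj f x0 ν i)) / (m : ℝ) - V x0 ≤ -α x0) :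
    ∀ x0 : Fin n → ℝ, ∃ ν : ℕ → Fin p → ℝ,
      (∀ j < m, ν j ∈ U ∧ traj f x0 ν (j + 1) ∈ X) ∧
      ∃ l, 1 ≤ l ∧ l ≤ m ∧ V (traj f x0 ν l) - V x0 ≤ -α x0 := by
  intro x0
  obtain ⟨ν, hfeas, hdec⟩ := hadc x0
  refine ⟨ν, hfeas, ?_⟩
  by_contra hcon
  push_neg at hcon
  set c : ℝ := V x0 - α x0 with hc
  have hc0 : 0 ≤ c := hVα x0
  have hmpos : (0 : ℝ) < m := by exact_mod_cast hm
  have hS : (m : ℝ) ≤ ∑ i ∈ Finset.Icc 1 m, σ i := by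
    have := (le_div_iff₀ hmpos).mp hσavg
    linarith
  -- some weight is positive
  have hex : ∃ i ∈ Finset.Icc 1 m, 0 < σ i := by
    by_contra h
    push_neg at h
    have hz : ∀ i ∈ Finset.Icc 1 m, σ i = 0 := fun i hi =>
      le_antisymm (h i hi) (hσ i hi)
    have : (∑ i ∈ Finset.Icc 1 m, σ i) = 0 := Finset.sum_eq_zero hz
    rw [this] at hS
    linarith
  obtain ⟨i0, hi0, hσi0⟩ := hex
  have hlt : ∀ i ∈ Finset.Icc 1 m, c < V (traj f x0 ν i) := by
    intro i hi
    obtain ⟨h1, h2⟩ := Finset.mem_Icc.mp hi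
    have := hcon i h1 h2
    linarith
  have hsum : (∑ i ∈ Finset.Icc 1 m, σ i * c) <
      ∑ i ∈ Finset.Icc 1 m, σ i * V (traj f x0 ν i) := by
    apply Finset.sum_lt_sum
    · intro i hi
      exact mul_le_mul_of_nonneg_left (le_of_lt (hlt i hi)) (hσ i hi)
    · exact ⟨i0, hi0, by
        exact mul_lt_mul_of_pos_left (hlt i0 hi0) hσi0⟩
  have hsumc : (∑ i ∈ Finset.Icc 1 m, σ i * c) = (∑ i ∈ Finset.Icc 1 m, σ i) * c := by
    rw [Finset.sum_mul]
  have h1 : (m : ℝ) * c ≤ (∑ i ∈ Finset.Icc 1 m, σ i) * c :=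
    mul_le_mul_of_nonneg_right hS hc0
  have h2 : (∑ i ∈ Finset.Icc 1 m, σ i * V (traj f x0 ν i)) / (m : ℝ) ≤ c := by
    linarith
  have h3 : (∑ i ∈ Finset.Icc 1 m, σ i * V (traj f x0 ν i)) ≤ (m : ℝ) * c := by
    have := (div_le_iff₀ hmpos).mp h2
    linarith [this]
  linarith
end

section
/- Consider the discrete-time control system and let V : ℝ^n → ℝ be a generalized discrete-time control Lyapunov function of order m (case q = 0) whose weights σ_1, …, σ_m are all strictly positive. Then there exists a control strategy rendering the origin asymptotically stable; precisely: (a) for every ε > 0 there exists δ > 0 such that every x^0 ∈ X with 0 < ‖x^0‖ < δ admits an infinite feasible control sequence whose trajectory satisfies ‖x^k‖ < ε for all k ∈ ℕ and x^k → 0 as k → ∞, and (b) every x^0 ∈ X admits an infinite feasible control sequence whose trajectory satisfies x^k → 0 as k → ∞. -/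
open Filter Topology

/-!
From any state `x`, the average decrease condition with positive weights of mean at least one
forces some state `x^i`, `1 ≤ i ≤ m`, along the adc controls to satisfy
`V (x^i) ≤ V x - α x`, while every intermediate value `V (x^j)` is at most `C * V x` with `C`
depending only on `m` and `σ`. Concatenating these segments, restarting from the reached state
each time, gives an infinite feasible control along which `V` of the restart state drops by `α`
at least once every `m` steps. Hence `α` of the restart states tends to `0`, so (positive
definiteness, radial unboundedness) the restart states tend to `0`, and the bound `C * V`
carries this over to the whole trajectory. The same bound `V (x^k) ≤ C * V (x^0)` gives
stability.
-/

open Finset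

section PositiveDefinite

variable {E : Type*} [NormedAddCommGroup E] {α : E → ℝ}

lemma PosDef.nonneg (hα : PosDef α) (z : E) : 0 ≤ α z := by
  rcases eq_or_ne z 0 with rfl | hz
  · exact hα.1.ge
  · exact (hα.2 z hz).le

lemma PosDef.exists_pos_forall_lt_imp_norm_lt [ProperSpace E] (hα : PosDef α)
    (hαc : Continuous α) (hαru : RadUnbounded α) {ε : ℝ} (hε : 0 < ε) :
    ∃ c > 0, ∀ x, α x < c → ‖x‖ < ε := by
  obtain ⟨R, hR⟩ := hαru 1
  have hK : IsCompact (Metric.closedBall (0 : E) R \ Metric.ball 0 ε) :=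
    (isCompact_closedBall 0 R).diff Metric.isOpen_ball
  obtain ⟨c, hc, hcK⟩ := hK.exists_forall_le' hαc.continuousOn fun x hx =>
    hα.2 x fun h => hx.2 (by simpa [h] using hε)
  refine ⟨min c 1, lt_min hc one_pos, fun x hx => ?_⟩
  by_contra! hxε
  have hxR : ‖x‖ ≤ R := by
    by_contra! h
    linarith [hR x h.le, min_le_right c 1]
  have := hcK x ⟨by simpa using hxR, by simpa using hxε⟩
  linarith [min_le_left c 1]

lemma PosDef.tendsto_nhds_zero_of_tendsto_comp [ProperSpace E] (hα : PosDef α)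
    (hαc : Continuous α) (hαru : RadUnbounded α) {ι : Type*} {l : Filter ι} {z : ι → E}
    (hz : Tendsto (fun i => α (z i)) l (𝓝 0)) : Tendsto z l (𝓝 0) := by
  rw [NormedAddGroup.tendsto_nhds_zero]
  intro ε hε
  obtain ⟨c, hc, hcε⟩ := hα.exists_pos_forall_lt_imp_norm_lt hαc hαru hε
  filter_upwards [hz.eventually_lt_const hc] with i hi
  exact hcε _ hi

end PositiveDefinite

lemma exists_le_of_sum_mul_le_sum_mul {ι : Type*} {s : Finset ι} (hs : s.Nonempty)
    {σ v : ι → ℝ} (hσ : ∀ i ∈ s, 0 < σ i) {b : ℝ}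
    (h : ∑ i ∈ s, σ i * v i ≤ (∑ i ∈ s, σ i) * b) : ∃ i ∈ s, v i ≤ b := by
  rw [Finset.sum_mul] at h
  obtain ⟨i, hi, hle⟩ := Finset.exists_le_of_sum_le hs h
  exact ⟨i, hi, le_of_mul_le_mul_left hle (hσ i hi)⟩

/-- The average decrease condition, stated for the values `v i = V (x^i)` along a trajectory. -/
def AvgDecrease (m : ℕ) (σ v : ℕ → ℝ) (a : ℝ) : Prop :=
  (∑ i ∈ Icc 1 m, σ i * v i) / m - v 0 ≤ -a

namespace AvgDecrease

variable {m : ℕ} {σ v : ℕ → ℝ} {a : ℝ}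

lemma sum_mul_le (hm : 1 ≤ m) (h : AvgDecrease m σ v a) :
    ∑ i ∈ Icc 1 m, σ i * v i ≤ m * (v 0 - a) := by
  have hm0 : (0 : ℝ) < m := by exact_mod_cast hm
  rw [AvgDecrease, sub_le_iff_le_add, div_le_iff₀ hm0] at h
  linarith

lemma exists_le_sub (hm : 1 ≤ m) (hσ : ∀ i ∈ Icc 1 m, 0 < σ i)
    (hσavg : 1 ≤ (∑ i ∈ Icc 1 m, σ i) / m) (ha : a ≤ v 0) (h : AvgDecrease m σ v a) :
    ∃ i ∈ Icc 1 m, v i ≤ v 0 - a := by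
  have hm0 : (0 : ℝ) < m := by exact_mod_cast hm
  refine exists_le_of_sum_mul_le_sum_mul (nonempty_Icc.mpr hm) hσ ?_
  calc ∑ i ∈ Icc 1 m, σ i * v i ≤ m * (v 0 - a) := h.sum_mul_le hm
    _ ≤ (∑ i ∈ Icc 1 m, σ i) * (v 0 - a) :=
      mul_le_mul_of_nonneg_right (by simpa using (le_div_iff₀ hm0).mp hσavg) (sub_nonneg.mpr ha)

lemma le_div_mul (hm : 1 ≤ m) (hσ : ∀ i ∈ Icc 1 m, 0 < σ i) (hv : ∀ i, 0 ≤ v i)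
    (ha : 0 ≤ a) (h : AvgDecrease m σ v a) {j : ℕ} (hj : j ∈ Icc 1 m) :
    v j ≤ m / σ j * v 0 := by
  have hσv : σ j * v j ≤ m * v 0 := calc
    σ j * v j ≤ ∑ i ∈ Icc 1 m, σ i * v i :=
      single_le_sum (f := fun i => σ i * v i) (fun i hi => mul_nonneg (hσ i hi).le (hv i)) hj
    _ ≤ m * (v 0 - a) := h.sum_mul_le hm
    _ ≤ m * v 0 := by gcongr; linarith
  rw [div_mul_eq_mul_div, le_div_iff₀ (hσ j hj)]
  linarith

end AvgDecrease

section Concatenation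

variable {n p : ℕ}

/-- Concatenation of the finite control segments `seg y` of length `len y`, restarted from
the reached state `y` at the end of each segment. The automaton state is the initial state of
the current segment together with the offset inside it. -/
def concatStep (f : (Fin n → ℝ) → (Fin p → ℝ) → Fin n → ℝ)
    (seg : (Fin n → ℝ) → ℕ → Fin p → ℝ) (len : (Fin n → ℝ) → ℕ)
    (st : (Fin n → ℝ) × ℕ) : (Fin n → ℝ) × ℕ :=
  if st.2 + 1 = len st.1 then (traj f st.1 (seg st.1) (len st.1), 0) else (st.1, st.2 + 1)

def concatState (f : (Fin n → ℝ) → (Fin p → ℝ) → Fin n → ℝ)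
    (seg : (Fin n → ℝ) → ℕ → Fin p → ℝ) (len : (Fin n → ℝ) → ℕ) (x0 : Fin n → ℝ) :
    ℕ → (Fin n → ℝ) × ℕ
  | 0 => (x0, 0)
  | t + 1 => concatStep f seg len (concatState f seg len x0 t)

def concatCtrl (f : (Fin n → ℝ) → (Fin p → ℝ) → Fin n → ℝ)
    (seg : (Fin n → ℝ) → ℕ → Fin p → ℝ) (len : (Fin n → ℝ) → ℕ) (x0 : Fin n → ℝ) :
    ℕ → Fin p → ℝ :=
  fun t => seg (concatState f seg len x0 t).1 (concatState f seg len x0 t).2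

variable {f : (Fin n → ℝ) → (Fin p → ℝ) → Fin n → ℝ} {seg : (Fin n → ℝ) → ℕ → Fin p → ℝ}
  {len : (Fin n → ℝ) → ℕ} {x0 : Fin n → ℝ}

variable (f seg len) in
lemma concatStep_eq_or (st : (Fin n → ℝ) × ℕ) :
    (st.2 + 1 = len st.1 ∧
      concatStep f seg len st = (traj f st.1 (seg st.1) (len st.1), 0)) ∨
    (st.2 + 1 ≠ len st.1 ∧ concatStep f seg len st = (st.1, st.2 + 1)) := by
  unfold concatStep
  split_ifs with h
  · exact Or.inl ⟨h, rfl⟩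
  · exact Or.inr ⟨h, rfl⟩

lemma traj_concatCtrl (t : ℕ) :
    traj f x0 (concatCtrl f seg len x0) t =
      traj f (concatState f seg len x0 t).1 (seg (concatState f seg len x0 t).1)
        (concatState f seg len x0 t).2 := by
  induction t with
  | zero => rfl
  | succ t ih =>
    change f (traj f x0 (concatCtrl f seg len x0) t) _ = _
    rw [ih]
    rcases concatStep_eq_or f seg len (concatState f seg len x0 t)
      with ⟨hend, hst⟩ | ⟨-, hst⟩
    · rw [concatState, hst, ← hend]
      rfl
    · rw [concatState, hst]
      rfl

lemma concatState_snd_lt (hlen : ∀ y, 0 < len y) (t : ℕ) :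
    (concatState f seg len x0 t).2 < len (concatState f seg len x0 t).1 := by
  induction t with
  | zero => exact hlen x0
  | succ t ih =>
    rcases concatStep_eq_or f seg len (concatState f seg len x0 t)
      with ⟨-, hst⟩ | hst
    · rw [concatState, hst]
      exact hlen _
    · rw [concatState, hst.2]
      exact lt_of_le_of_ne ih hst.1

lemma concatCtrl_feasible {X : Set (Fin n → ℝ)} {U : Set (Fin p → ℝ)} (hlen : ∀ y, 0 < len y)
    (hfeas : ∀ y, ∀ j < len y, seg y j ∈ U ∧ traj f y (seg y) (j + 1) ∈ X) (t : ℕ) :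
    concatCtrl f seg len x0 t ∈ U ∧ traj f x0 (concatCtrl f seg len x0) (t + 1) ∈ X := by
  change _ ∧ f (traj f x0 (concatCtrl f seg len x0) t) _ ∈ X
  rw [traj_concatCtrl]
  exact hfeas _ _ (concatState_snd_lt hlen t)

variable {V α : (Fin n → ℝ) → ℝ}

lemma antitone_concatState_fst (hα : ∀ x, 0 ≤ α x)
    (hdec : ∀ y, V (traj f y (seg y) (len y)) ≤ V y - α y) :
    Antitone fun t => V (concatState f seg len x0 t).1 := by
  refine antitone_nat_of_succ_le fun t => ?_
  rcases concatStep_eq_or f seg len (concatState f seg len x0 t)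
    with ⟨-, hst⟩ | ⟨-, hst⟩
  · simp only [concatState, hst]
    linarith [hdec (concatState f seg len x0 t).1, hα (concatState f seg len x0 t).1]
  · simp only [concatState, hst, le_refl]

/-- Every segment has length at most `m`, so within `m` steps a segment ends and `V` drops. -/
lemma concatState_fst_le_sub {m : ℕ} (hα : ∀ x, 0 ≤ α x) (hlen : ∀ y, len y ∈ Icc 1 m)
    (hdec : ∀ y, V (traj f y (seg y) (len y)) ≤ V y - α y) (t : ℕ) :
    V (concatState f seg len x0 (t + m)).1 ≤
      V (concatState f seg len x0 t).1 - α (concatState f seg len x0 t).1 := by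
  set s := concatState f seg len x0
  have hrun : ∀ r,
      s (t + r) = ((s t).1, (s t).2 + r) ∨ V (s (t + r)).1 ≤ V (s t).1 - α (s t).1 := by
    intro r
    induction r with
    | zero => exact Or.inl rfl
    | succ r ih =>
      rcases ih with hr | hr
      · rcases concatStep_eq_or f seg len (s (t + r))
          with ⟨-, hst⟩ | ⟨-, hst⟩
        · right
          change V (concatStep f seg len (s (t + r))).1 ≤ _
          rw [hst, hr]
          exact hdec _
        · left
          change concatStep f seg len (s (t + r)) = _
          rw [hst, hr, add_assoc]
      · exact Or.inr ((antitone_concatState_fst hα hdec (Nat.le_succ _)).trans hr)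
  refine (hrun m).resolve_left fun hm => ?_
  have hlt : (s (t + m)).2 < len (s (t + m)).1 :=
    concatState_snd_lt (fun y => (mem_Icc.mp (hlen y)).1) (t + m)
  rw [hm] at hlt
  dsimp only at hlt
  have := (mem_Icc.mp (hlen (s t).1)).2
  omega

lemma apply_traj_concatCtrl_le {C : ℝ} (hlen : ∀ y, 0 < len y)
    (hbound : ∀ y, ∀ j < len y, V (traj f y (seg y) j) ≤ C * V y) (t : ℕ) :
    V (traj f x0 (concatCtrl f seg len x0) t) ≤ C * V (concatState f seg len x0 t).1 := by
  rw [traj_concatCtrl]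
  exact hbound _ _ (concatState_snd_lt hlen t)

theorem tendsto_traj_concatCtrl {m : ℕ} {C : ℝ} (hVc : Continuous V) (hV0 : V 0 = 0)
    (hα : PosDef α) (hαc : Continuous α) (hαru : RadUnbounded α) (hαV : ∀ x, α x ≤ V x)
    (hlen : ∀ y, len y ∈ Icc 1 m) (hdec : ∀ y, V (traj f y (seg y) (len y)) ≤ V y - α y)
    (hbound : ∀ y, ∀ j < len y, V (traj f y (seg y) j) ≤ C * V y) :
    Tendsto (traj f x0 (concatCtrl f seg len x0)) atTop (𝓝 0) := by
  set s := concatState f seg len x0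
  have hlen0 : ∀ y, 0 < len y := fun y => (mem_Icc.mp (hlen y)).1
  have hV : ∀ x, 0 ≤ V x := fun x => (hα.nonneg x).trans (hαV x)
  have hanti := antitone_concatState_fst (x0 := x0) hα.nonneg hdec
  have hVs := tendsto_atTop_ciInf hanti ⟨0, by rintro _ ⟨t, rfl⟩; exact hV _⟩
  have hαs : Tendsto (fun t => α (s t).1) atTop (𝓝 0) := by
    refine squeeze_zero (g := fun t => V (s t).1 - V (s (t + m)).1) (fun t => hα.nonneg _)
      (fun t => by linarith [concatState_fst_le_sub (x0 := x0) hα.nonneg hlen hdec t]) ?_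
    simpa using hVs.sub (hVs.comp (tendsto_add_atTop_nat m))
  have hs : Tendsto (fun t => (s t).1) atTop (𝓝 0) :=
    hα.tendsto_nhds_zero_of_tendsto_comp hαc hαru hαs
  have hVs0 : Tendsto (fun t => V (s t).1) atTop (𝓝 0) := by
    simpa [hV0, Function.comp_def] using (hVc.tendsto 0).comp hs
  have hVtraj : Tendsto (fun t => V (traj f x0 (concatCtrl f seg len x0) t)) atTop (𝓝 0) := by
    refine squeeze_zero (fun t => hV _) (apply_traj_concatCtrl_le hlen0 hbound) ?_
    simpa using hVs0.const_mul C
  exact hα.tendsto_nhds_zero_of_tendsto_comp hαc hαru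
    (squeeze_zero (fun t => hα.nonneg _) (fun t => hαV _) hVtraj)

end Concatenation

theorem exists_stabilizing_ctrl_of_avgDecrease {n p m : ℕ} (hm : 1 ≤ m)
    {f : (Fin n → ℝ) → (Fin p → ℝ) → Fin n → ℝ} {X : Set (Fin n → ℝ)} {U : Set (Fin p → ℝ)}
    {V α : (Fin n → ℝ) → ℝ} (hVc : Continuous V) (hV0 : V 0 = 0)
    (hα : PosDef α) (hαc : Continuous α) (hαru : RadUnbounded α) (hαV : ∀ x, α x ≤ V x)
    {σ : ℕ → ℝ} (hσ : ∀ i ∈ Icc 1 m, 0 < σ i) (hσavg : 1 ≤ (∑ i ∈ Icc 1 m, σ i) / m)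
    (hadc : ∀ x0, ∃ ν : ℕ → Fin p → ℝ, (∀ j < m, ν j ∈ U ∧ traj f x0 ν (j + 1) ∈ X) ∧
      AvgDecrease m σ (fun i => V (traj f x0 ν i)) (α x0)) :
    ∃ C, ∀ x0, ∃ u : ℕ → Fin p → ℝ, (∀ k, u k ∈ U ∧ traj f x0 u (k + 1) ∈ X) ∧
      (∀ k, V (traj f x0 u k) ≤ C * V x0) ∧ Tendsto (traj f x0 u) atTop (𝓝 0) := by
  have hV : ∀ x, 0 ≤ V x := fun x => (hα.nonneg x).trans (hαV x)
  choose seg hfeas hseg using hadc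
  choose len hlen hdec using fun y => (hseg y).exists_le_sub hm hσ hσavg (hαV y)
  have hlen0 : ∀ y, 0 < len y := fun y => (mem_Icc.mp (hlen y)).1
  have hlenm : ∀ y, len y ≤ m := fun y => (mem_Icc.mp (hlen y)).2
  obtain ⟨C, hC⟩ := (insert 1 ((Icc 1 m).image fun j => (m : ℝ) / σ j)).exists_le
  have hC1 : 1 ≤ C := hC 1 (mem_insert_self _ _)
  have hbound : ∀ y, ∀ j < len y, V (traj f y (seg y) j) ≤ C * V y := by
    intro y j hj
    rcases j.eq_zero_or_pos with rfl | hj0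
    · exact le_mul_of_one_le_left (hV y) hC1
    · have hjm : j ∈ Icc 1 m := mem_Icc.mpr ⟨hj0, (hj.trans_le (hlenm y)).le⟩
      calc V (traj f y (seg y) j) ≤ m / σ j * V y :=
            (hseg y).le_div_mul hm hσ (fun _ => hV _) (hα.nonneg y) hjm
        _ ≤ C * V y :=
            mul_le_mul_of_nonneg_right (hC _ (mem_insert_of_mem (mem_image_of_mem _ hjm))) (hV y)
  refine ⟨C, fun x0 => ⟨concatCtrl f seg len x0,
    concatCtrl_feasible hlen0 fun y j hj => hfeas y j (hj.trans_le (hlenm y)), fun k => ?_,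
    tendsto_traj_concatCtrl hVc hV0 hα hαc hαru hαV hlen hdec hbound⟩⟩
  calc V (traj f x0 (concatCtrl f seg len x0) k) ≤ C * V (concatState f seg len x0 k).1 :=
        apply_traj_concatCtrl_le hlen0 hbound k
    _ ≤ C * V x0 := by
        gcongr
        exact antitone_concatState_fst hα.nonneg hdec (Nat.zero_le k)

theorem stmt_6_general (n p m : ℕ) (hm : 1 ≤ m)
    (f : (Fin n → ℝ) → (Fin p → ℝ) → Fin n → ℝ)
    (X : Set (Fin n → ℝ)) (U : Set (Fin p → ℝ))
    (V α : (Fin n → ℝ) → ℝ)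
    (hVc : Continuous V) (hVpd : PosDef V)
    (hαc : Continuous α) (hαpd : PosDef α) (hαru : RadUnbounded α)
    (σ : ℕ → ℝ) (hσpos : ∀ i ∈ Finset.Icc 1 m, 0 < σ i)
    (hσavg : 1 ≤ (∑ i ∈ Finset.Icc 1 m, σ i) / (m : ℝ))
    (hVα : ∀ x : Fin n → ℝ, V x - α x ≥ 0)
    (hadc : ∀ x0 : Fin n → ℝ, ∃ ν : ℕ → Fin p → ℝ,
      (∀ j < m, ν j ∈ U ∧ traj f x0 ν (j + 1) ∈ X) ∧
      (∑ i ∈ Finset.Icc 1 m, σ i * V (traj f x0 ν i)) / (m : ℝ) - V x0 ≤ -α x0) :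
    (∀ ε > (0 : ℝ), ∃ δ > (0 : ℝ), ∀ x0 ∈ X, 0 < ‖x0‖ → ‖x0‖ < δ →
      ∃ u : ℕ → Fin p → ℝ,
        (∀ k : ℕ, u k ∈ U ∧ traj f x0 u (k + 1) ∈ X) ∧
        (∀ k : ℕ, ‖traj f x0 u k‖ < ε) ∧
        Filter.Tendsto (traj f x0 u) Filter.atTop (nhds 0)) ∧
    (∀ x0 ∈ X, ∃ u : ℕ → Fin p → ℝ,
      (∀ k : ℕ, u k ∈ U ∧ traj f x0 u (k + 1) ∈ X) ∧
      Filter.Tendsto (traj f x0 u) Filter.atTop (nhds 0)) := by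
  have hαV : ∀ x, α x ≤ V x := fun x => sub_nonneg.mp (hVα x)
  obtain ⟨C, hstrat⟩ := exists_stabilizing_ctrl_of_avgDecrease hm hVc hVpd.1 hαpd hαc hαru hαV
    hσpos hσavg hadc
  refine ⟨fun ε hε => ?_, fun x0 _ => ?_⟩
  · obtain ⟨c, hc, hcε⟩ := hαpd.exists_pos_forall_lt_imp_norm_lt hαc hαru hε
    have hCV : Tendsto (fun x => C * V x) (𝓝 0) (𝓝 0) := by
      simpa [hVpd.1] using (hVc.tendsto 0).const_mul C
    obtain ⟨δ, hδ, hδc⟩ := Metric.eventually_nhds_iff.mp (hCV.eventually_lt_const hc)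
    refine ⟨δ, hδ, fun x0 _ _ hx0 => ?_⟩
    obtain ⟨u, hfeas, hVu, htend⟩ := hstrat x0
    refine ⟨u, hfeas, fun k => hcε _ ?_, htend⟩
    exact (hαV _).trans_lt ((hVu k).trans_lt (hδc (by simpa using hx0)))
  · obtain ⟨u, hfeas, -, htend⟩ := hstrat x0
    exact ⟨u, hfeas, htend⟩

/-- if `V` is a g-dclf of order `m` (case `q = 0`) with strictly positive
weights, there is a control strategy rendering the origin asymptotically stable:
(a) for every `ε > 0` there is `δ > 0` such that every `x0 ∈ X` with `0 < ‖x0‖ < δ`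
admits an infinite feasible control whose trajectory stays in the `ε`-ball and
converges to zero, and (b) every `x0 ∈ X` admits an infinite feasible control whose
trajectory converges to zero. -/
theorem stmt_6 (n p m : ℕ) (hn : 1 ≤ n) (hp : 1 ≤ p) (hm : 1 ≤ m)
    (f : (Fin n → ℝ) → (Fin p → ℝ) → Fin n → ℝ)
    (hf : Continuous (Function.uncurry f)) (hf0 : f 0 0 = 0)
    (X : Set (Fin n → ℝ)) (U : Set (Fin p → ℝ))
    (hX : (0 : Fin n → ℝ) ∈ interior X) (hU : (0 : Fin p → ℝ) ∈ interior U)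
    (V α : (Fin n → ℝ) → ℝ)
    (hVc : Continuous V) (hVpd : PosDef V)
    (hαc : Continuous α) (hαpd : PosDef α) (hαru : RadUnbounded α)
    (σ : ℕ → ℝ) (hσpos : ∀ i ∈ Finset.Icc 1 m, 0 < σ i)
    (hσavg : 1 ≤ (∑ i ∈ Finset.Icc 1 m, σ i) / (m : ℝ))
    (hVα : ∀ x : Fin n → ℝ, V x - α x ≥ 0)
    (hadc : ∀ x0 : Fin n → ℝ, ∃ ν : ℕ → Fin p → ℝ,
      (∀ j < m, ν j ∈ U ∧ traj f x0 ν (j + 1) ∈ X) ∧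
      (∑ i ∈ Finset.Icc 1 m, σ i * V (traj f x0 ν i)) / (m : ℝ) - V x0 ≤ -α x0) :
    (∀ ε > (0 : ℝ), ∃ δ > (0 : ℝ), ∀ x0 ∈ X, 0 < ‖x0‖ → ‖x0‖ < δ →
      ∃ u : ℕ → Fin p → ℝ,
        (∀ k : ℕ, u k ∈ U ∧ traj f x0 u (k + 1) ∈ X) ∧
        (∀ k : ℕ, ‖traj f x0 u k‖ < ε) ∧
        Filter.Tendsto (traj f x0 u) Filter.atTop (nhds 0)) ∧
    (∀ x0 ∈ X, ∃ u : ℕ → Fin p → ℝ,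
      (∀ k : ℕ, u k ∈ U ∧ traj f x0 u (k + 1) ∈ X) ∧
      Filter.Tendsto (traj f x0 u) Filter.atTop (nhds 0)) :=
  stmt_6_general n p m hm f X U V α hVc hVpd hαc hαpd hαru σ hσpos hσavg hVα hadc
end

section
/- Fix h > 0 and define φ : ℝ^4 × ℝ^2 → ℝ^4 by φ(x, u) = h·(u_1, u_2, −x_2 u_1 + x_1 u_2, x_3 u_1 + x_2 u_2 + |x_4|), where x = (x_1, x_2, x_3, x_4) and u = (u_1, u_2). Then for every y_4 > 0 the equation φ(x, u) = (0, 0, 0, −y_4) has no solution (x, u) ∈ ℝ^4 × ℝ^2. Consequently, the discrete-time control system x^{k+1} = x^k + h(u_1^k, u_2^k, −x_2^k u_1^k + x_1^k u_2^k, x_3^k u_1^k + x_2^k u_2^k + |x_4^k|), a variation of the Brockett integrator, violates Brockett's necessary condition for the existence of a smooth stabilizing state feedback, since the image of the map (x, u) ↦ f(x, u) − x omits points arbitrarily close to the origin. -/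
/-- The map `φ(x,u) = f(x,u) - x` for the perturbed discrete-time Brockett
integrator with sampling time `h`:
`φ(x,u) = h (u₁, u₂, -x₂u₁ + x₁u₂, x₃u₁ + x₂u₂ + |x₄|)`. -/
def brockettPhi (h : ℝ) (x : ℝ × ℝ × ℝ × ℝ) (u : ℝ × ℝ) : ℝ × ℝ × ℝ × ℝ :=
  (h * u.1, h * u.2, h * (-x.2.1 * u.1 + x.1 * u.2),
    h * (x.2.2.1 * u.1 + x.2.1 * u.2 + |x.2.2.2|))

lemma brockett_no_sol (h : ℝ) (hh : 0 < h) (y₄ : ℝ) (hy : 0 < y₄) :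
    ¬ ∃ (x : ℝ × ℝ × ℝ × ℝ) (u : ℝ × ℝ),
      brockettPhi h x u = ((0 : ℝ), (0 : ℝ), (0 : ℝ), -y₄) := by
  rintro ⟨x, u, hxu⟩
  simp only [brockettPhi, Prod.mk.injEq] at hxu
  obtain ⟨h1, h2, h3, h4⟩ := hxu
  have hu1 : u.1 = 0 := by
    rcases mul_eq_zero.mp h1 with h' | h' <;> [exact absurd h' hh.ne'; exact h']
  have hu2 : u.2 = 0 := by
    rcases mul_eq_zero.mp h2 with h' | h' <;> [exact absurd h' hh.ne'; exact h']
  rw [hu1, hu2] at h4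
  simp at h4
  have : (0:ℝ) ≤ h * |x.2.2.2| := mul_nonneg hh.le (abs_nonneg _)
  rw [h4] at this
  linarith

/-- for every `y₄ > 0` the equation `φ(x,u) = (0,0,0,-y₄)` has no
solution; consequently the system violates Brockett's necessary condition: the image
of `(x,u) ↦ f(x,u) - x` omits points arbitrarily close to the origin. -/
theorem stmt_14 (h : ℝ) (hh : 0 < h) :
    (∀ y₄ : ℝ, 0 < y₄ →
      ¬ ∃ (x : ℝ × ℝ × ℝ × ℝ) (u : ℝ × ℝ),
        brockettPhi h x u = ((0 : ℝ), (0 : ℝ), (0 : ℝ), -y₄)) ∧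
    (∀ ε > (0 : ℝ), ∃ y : ℝ × ℝ × ℝ × ℝ, ‖y‖ < ε ∧
      ∀ (x : ℝ × ℝ × ℝ × ℝ) (u : ℝ × ℝ), brockettPhi h x u ≠ y) := by
  refine ⟨fun y₄ hy => brockett_no_sol h hh y₄ hy, fun ε hε => ?_⟩
  refine ⟨((0:ℝ), (0:ℝ), (0:ℝ), -(ε/2)), ?_, ?_⟩
  · have : ‖(((0:ℝ), (0:ℝ), (0:ℝ), -(ε/2)) : ℝ × ℝ × ℝ × ℝ)‖ = ε/2 := by
      simp [Prod.norm_def, abs_of_pos hε]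
      positivity
    rw [this]; linarith
  · intro x u hc
    exact brockett_no_sol h hh (ε/2) (half_pos hε) ⟨x, u, hc⟩
end
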